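/- Let (I, J) be a pair of distinct-element sequences of length s in [n]. Then there exists a decomposition of (I, J), i.e., pairwise disjoint sets A₁, …, A_t ⊆ [s] such that each (I_{A_j}, J_{A_j}) is a minimal equal sub-pair and the complement B = [s] \ (A₁ ∪ ⋯ ∪ A_t) is free of equalities; moreover this decomposition is unique up to reordering of the sets A_j. -/

import Mathlib

/-- `(I_A, J_A)` is a minimal equal sub-pair of `(I, J)`. -/
def MinimalEqualSubPair {n s : ℕ} (I J : Fin s → Fin n) (A : Finset (Fin s)) : Prop :=
  A.Nonempty ∧ A.image I = A.image J ∧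
    ∀ A' ⊂ A, A'.Nonempty → A'.image I ≠ A'.image J

/-- `(I_B, J_B)` is free of equalities: `I_A ≠ J_A` as sets for every nonempty `A ⊆ B`. -/
def FreeOfEqualities {n s : ℕ} (I J : Fin s → Fin n) (B : Finset (Fin s)) : Prop :=
  ∀ A ⊆ B, A.Nonempty → A.image I ≠ A.image J

/-
Since `I` and `J` are injective, the index sets `A` with `I_A = J_A` are closed under
intersection, so two minimal ones are equal or disjoint. Every nonempty such `A` contains a
minimal one, hence a set is free of equalities iff it contains no minimal equal sub-pair.
The decomposition is therefore forced to consist of all minimal equal sub-pairs.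
-/

theorem Finset.image_inter_eq_image_inter {ι α : Type*} [DecidableEq ι] [DecidableEq α]
    {I J : ι → α} (hI : Function.Injective I) (hJ : Function.Injective J)
    {A B : Finset ι} (hA : A.image I = A.image J) (hB : B.image I = B.image J) :
    (A ∩ B).image I = (A ∩ B).image J := by
  rw [Finset.image_inter _ _ hI, Finset.image_inter _ _ hJ, hA, hB]

namespace MinimalEqualSubPair

variable {n s : ℕ} {I J : Fin s → Fin n} {A B C : Finset (Fin s)}

theorem eq_of_subset (hA : MinimalEqualSubPair I J A) (hCA : C ⊆ A) (hC : C.Nonempty)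
    (hCeq : C.image I = C.image J) : C = A := by
  by_contra hne
  exact hA.2.2 C (hCA.ssubset_of_ne hne) hC hCeq

theorem eq_of_not_disjoint (hI : Function.Injective I) (hJ : Function.Injective J)
    (hA : MinimalEqualSubPair I J A) (hB : MinimalEqualSubPair I J B) (hAB : ¬Disjoint A B) :
    A = B := by
  have hne : (A ∩ B).Nonempty := Finset.not_disjoint_iff_nonempty_inter.1 hAB
  have heq := Finset.image_inter_eq_image_inter hI hJ hA.2.1 hB.2.1
  exact (hA.eq_of_subset Finset.inter_subset_left hne heq).symm.trans
    (hB.eq_of_subset Finset.inter_subset_right hne heq)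

end MinimalEqualSubPair

theorem exists_minimalEqualSubPair_subset {n s : ℕ} {I J : Fin s → Fin n} {A : Finset (Fin s)}
    (hA : A.Nonempty) (hAeq : A.image I = A.image J) :
    ∃ C ⊆ A, MinimalEqualSubPair I J C := by
  induction A using Finset.strongInduction with
  | H A ih =>
    by_cases hmin : ∀ A' ⊂ A, A'.Nonempty → A'.image I ≠ A'.image J
    · exact ⟨A, subset_rfl, hA, hAeq, hmin⟩
    · push Not at hmin
      obtain ⟨A', hA'A, hA', hA'eq⟩ := hmin
      obtain ⟨C, hCA', hC⟩ := ih A' hA'A hA' hA'eq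
      exact ⟨C, hCA'.trans hA'A.subset, hC⟩

theorem freeOfEqualities_iff {n s : ℕ} {I J : Fin s → Fin n} {B : Finset (Fin s)} :
    FreeOfEqualities I J B ↔ ∀ C, MinimalEqualSubPair I J C → ¬C ⊆ B := by
  constructor
  · intro hB C hC hCB
    exact hB C hCB hC.1 hC.2.1
  · intro hB A hAB hA hAeq
    obtain ⟨C, hCA, hC⟩ := exists_minimalEqualSubPair_subset hA hAeq
    exact hB C hC (hCA.trans hAB)

/-- Every pair of distinct-element sequences admits a decomposition into pairwise disjoint
minimal equal sub-pairs together with a remainder that is free of equalities, and this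
decomposition is unique (up to reordering, i.e. as a set of index sets). -/
theorem stmt4 {n s : ℕ} (I J : Fin s → Fin n)
    (hI : Function.Injective I) (hJ : Function.Injective J) :
    ∃! 𝒜 : Finset (Finset (Fin s)),
      (∀ A ∈ 𝒜, MinimalEqualSubPair I J A) ∧
      ((𝒜 : Set (Finset (Fin s))).Pairwise fun A B => Disjoint A B) ∧
      FreeOfEqualities I J (Finset.univ \ 𝒜.sup id) := by
  classical
  have subset_compl_iff (𝒜 : Finset (Finset (Fin s))) (C : Finset (Fin s)) :
      C ⊆ Finset.univ \ 𝒜.sup id ↔ ∀ A ∈ 𝒜, Disjoint C A := by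
    simp [Finset.subset_sdiff, Finset.disjoint_sup_right]
  refine ⟨Finset.univ.filter (MinimalEqualSubPair I J),
    ⟨fun A hA => by simpa using hA, ?_, ?_⟩, ?_⟩
  · intro A hA B hB hAB
    simp only [Finset.coe_filter, Finset.mem_univ, true_and] at hA hB
    by_contra h
    exact hAB (hA.eq_of_not_disjoint hI hJ hB h)
  · refine freeOfEqualities_iff.2 fun C hC hCsub => ?_
    have hCC := (subset_compl_iff _ C).1 hCsub C (by simpa using hC)
    exact hC.1.ne_empty (disjoint_self.1 hCC)
  · rintro ℬ ⟨hℬmin, -, hℬfree⟩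
    ext A
    simp only [Finset.mem_filter, Finset.mem_univ, true_and]
    refine ⟨fun hA => hℬmin A hA, fun hA => ?_⟩
    obtain ⟨B, hB, hAB⟩ : ∃ B ∈ ℬ, ¬Disjoint A B := by
      by_contra! h
      exact freeOfEqualities_iff.1 hℬfree A hA ((subset_compl_iff ℬ A).2 h)
    exact (hA.eq_of_not_disjoint hI hJ (hℬmin B hB) hAB) ▸ hB
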